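/- Fix N ≥ 1, molar masses M_1,…,M_{N+1} > 0, and symmetric diffusion coefficients D_{ij} = D_{ji} > 0 for i ≠ j. For every ρ' in the open simplex S, the N×N matrix B(ρ') = A_0(ρ')^{-1} G(ρ')^{-1} is symmetric and positive definite, and there exists a constant C > 0 depending only on the M_i and D_{ij} such that every entry of B(ρ') has absolute value at most C, uniformly for ρ' ∈ S. -/

import Mathlib

open Finset Matrix

/-!
Write `r = (ρ', ρ_{N+1})` for the full vector of mass fractions and `E x = (x, -∑ x)`. Then
`G = c Eᵀ diag(r)⁻¹ E`, and `E A₀ = diag(r) K E` for the symmetric matrix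
`K = diag(∑ₖ d_{ik} r_k / r_i) - (d_{ij})`, so `B⁻¹ = G A₀ = c Eᵀ K E` is symmetric. Since `E x`
sums to zero, the identity `z ⬝ K z = ½ ∑_{ij} d_{ij} r_i r_j (z_i / r_i - z_j / r_j)²` gives
`x ⬝ B⁻¹ x ≥ δ ∑ (E x)_i² / r_i ≥ δ |x|²`, with `δ` a lower bound for `c d_{ij}` (`i ≠ j`) that
is uniform on the simplex because `c ≤ 1 / min M`. A symmetric matrix with `x ⬝ P x ≥ δ |x|²`
is positive definite, and its inverse has entries bounded by `1 / δ`.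
-/

section

variable {ι : Type*} [Fintype ι]

theorem posDef_of_coercive {P : Matrix ι ι ℝ} (hP : P.IsSymm) {ε : ℝ} (hε : 0 < ε)
    (hcoer : ∀ x, ε * (x ⬝ᵥ x) ≤ x ⬝ᵥ P *ᵥ x) : P.PosDef :=
  .of_dotProduct_mulVec_pos (isHermitian_iff_isSymm.2 hP) fun x hx =>
    (mul_pos hε (dotProduct_star_self_pos_iff.2 hx)).trans_le (by simpa using hcoer x)

variable [DecidableEq ι]

noncomputable def maxwellStefanMatrix (r : ι → ℝ) (d : Matrix ι ι ℝ) : Matrix ι ι ℝ :=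
  diagonal (fun i => (∑ k, d i k * r k) / r i) - d

variable {r : ι → ℝ} {d : Matrix ι ι ℝ}

theorem maxwellStefanMatrix_isSymm (hd : d.IsSymm) : (maxwellStefanMatrix r d).IsSymm :=
  (isSymm_diagonal _).sub hd

theorem vecMul_maxwellStefanMatrix (hr : ∀ i, r i ≠ 0) (hd : d.IsSymm) :
    r ᵥ* maxwellStefanMatrix r d = 0 := by
  ext j
  rw [maxwellStefanMatrix, vecMul_sub, Pi.sub_apply, vecMul_diagonal, mul_div_cancel₀ _ (hr j),
    Pi.zero_apply, sub_eq_zero, vecMul, dotProduct]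
  exact Finset.sum_congr rfl fun k _ => by rw [hd.apply j k, mul_comm]

theorem dotProduct_maxwellStefanMatrix_mulVec (hr : ∀ i, r i ≠ 0) (hd : d.IsSymm)
    (z : ι → ℝ) :
    z ⬝ᵥ maxwellStefanMatrix r d *ᵥ z
      = (∑ i, ∑ j, d i j * r i * r j * (z i / r i - z j / r j) ^ 2) / 2 := by
  have hsq : ∀ i j, d i j * r i * r j * (z i / r i - z j / r j) ^ 2
      = z i ^ 2 / r i * (d i j * r j) + z j ^ 2 / r j * (d j i * r i)
        - 2 * (z i * (d i j * z j)) := by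
    intro i j
    rw [hd.apply j i]
    field_simp [hr i, hr j]
    ring
  have hswap : ∑ i, ∑ j, z j ^ 2 / r j * (d j i * r i) = ∑ i, ∑ j, z i ^ 2 / r i * (d i j * r j) :=
    Finset.sum_comm
  simp only [hsq, Finset.sum_sub_distrib, Finset.sum_add_distrib, hswap, ← Finset.mul_sum]
  rw [maxwellStefanMatrix, sub_mulVec, dotProduct_sub]
  simp only [dotProduct, mulVec_diagonal]
  simp only [mulVec, dotProduct]
  have hdiag : ∀ i, z i * ((∑ k, d i k * r k) / r i * z i) = z i ^ 2 / r i * ∑ k, d i k * r k :=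
    fun i => by ring
  rw [Finset.sum_congr rfl fun i _ => hdiag i]
  ring

theorem dotProduct_maxwellStefanMatrix_const_mulVec (hr1 : ∑ i, r i = 1)
    (δ : ℝ) {z : ι → ℝ} (hz : ∑ i, z i = 0) :
    z ⬝ᵥ maxwellStefanMatrix r (of fun _ _ => δ) *ᵥ z = δ * ∑ i, z i ^ 2 / r i := by
  have hrow : ∀ i, ∑ k, (of fun _ _ => δ : Matrix ι ι ℝ) i k * r k = δ := fun i => by
    simp only [of_apply, ← Finset.mul_sum, hr1, mul_one]
  have hcross : z ⬝ᵥ (of fun _ _ => δ : Matrix ι ι ℝ) *ᵥ z = 0 := by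
    simp only [dotProduct, mulVec, of_apply, ← Finset.mul_sum, hz, mul_zero, sum_const_zero]
  rw [maxwellStefanMatrix, sub_mulVec, dotProduct_sub, hcross, sub_zero]
  simp only [hrow, dotProduct, mulVec_diagonal, Finset.mul_sum]
  exact Finset.sum_congr rfl fun i _ => by ring

theorem dotProduct_maxwellStefanMatrix_mulVec_mono (hr : ∀ i, 0 < r i) {d' : Matrix ι ι ℝ}
    (hd : d.IsSymm) (hd' : d'.IsSymm) (hle : ∀ i j, i ≠ j → d i j ≤ d' i j) (z : ι → ℝ) :
    z ⬝ᵥ maxwellStefanMatrix r d *ᵥ z ≤ z ⬝ᵥ maxwellStefanMatrix r d' *ᵥ z := by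
  have hr0 : ∀ i, r i ≠ 0 := fun i => (hr i).ne'
  rw [dotProduct_maxwellStefanMatrix_mulVec hr0 hd, dotProduct_maxwellStefanMatrix_mulVec hr0 hd']
  refine div_le_div_of_nonneg_right (sum_le_sum fun i _ => sum_le_sum fun j _ => ?_) zero_le_two
  rcases eq_or_ne i j with rfl | hij
  · simp
  · have hri := hr i
    have hrj := hr j
    gcongr
    exact hle i j hij

theorem mul_dotProduct_self_le_dotProduct_maxwellStefanMatrix_mulVec (hr : ∀ i, 0 < r i)
    (hr1 : ∑ i, r i = 1) (hd : d.IsSymm) {δ : ℝ} (hδ : 0 ≤ δ)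
    (hdδ : ∀ i j, i ≠ j → δ ≤ d i j) {z : ι → ℝ} (hz : ∑ i, z i = 0) :
    δ * (z ⬝ᵥ z) ≤ z ⬝ᵥ maxwellStefanMatrix r d *ᵥ z := by
  have hsq : ∀ i, z i * z i ≤ z i ^ 2 / r i := fun i => by
    have hri : r i ≤ 1 := hr1 ▸ single_le_sum (fun j _ => (hr j).le) (mem_univ i)
    rw [le_div_iff₀ (hr i)]
    nlinarith [sq_nonneg (z i)]
  calc δ * (z ⬝ᵥ z) ≤ δ * ∑ i, z i ^ 2 / r i := by gcongr; exact sum_le_sum fun i _ => hsq i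
    _ = z ⬝ᵥ maxwellStefanMatrix r (of fun _ _ => δ) *ᵥ z :=
      (dotProduct_maxwellStefanMatrix_const_mulVec hr1 δ hz).symm
    _ ≤ z ⬝ᵥ maxwellStefanMatrix r d *ᵥ z :=
      dotProduct_maxwellStefanMatrix_mulVec_mono hr (IsSymm.ext fun _ _ => rfl) hd hdδ z

theorem abs_inv_apply_le_of_coercive {P : Matrix ι ι ℝ} (hP : IsUnit P.det) {ε : ℝ} (hε : 0 < ε)
    (hcoer : ∀ x, ε * (x ⬝ᵥ x) ≤ x ⬝ᵥ P *ᵥ x) (i j : ι) : |P⁻¹ i j| ≤ ε⁻¹ := by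
  -- `y = P⁻¹ eⱼ` satisfies `ε |y|² ≤ y ⬝ P y = y j ≤ |y|`, so `|y| ≤ ε⁻¹`.
  set y := P⁻¹ *ᵥ Pi.single j 1
  have hPy : P *ᵥ y = Pi.single j 1 := by
    rw [mulVec_mulVec, mul_nonsing_inv _ hP, one_mulVec]
  have hyi : P⁻¹ i j = y i := by simp [y, mulVec_single]
  have hyj : ε * (y ⬝ᵥ y) ≤ y j := by simpa [hPy] using hcoer y
  have hcoord : ∀ k, y k ^ 2 ≤ y ⬝ᵥ y := fun k =>
    (sq (y k)).trans_le (single_le_sum (fun l _ => mul_self_nonneg (y l)) (mem_univ k))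
  have hs : 0 ≤ y ⬝ᵥ y := (sq_nonneg _).trans (hcoord i)
  have hεs : ε ^ 2 * (y ⬝ᵥ y) ≤ 1 := by
    rcases hs.eq_or_lt with hs0 | hs0
    · simp [← hs0]
    · have hsq : (ε * (y ⬝ᵥ y)) ^ 2 ≤ y j ^ 2 := pow_le_pow_left₀ (by positivity) hyj 2
      refine le_of_mul_le_mul_right ?_ hs0
      nlinarith [hcoord j]
  have hεy : (ε * |y i|) ^ 2 ≤ 1 := by
    rw [mul_pow, sq_abs]
    nlinarith [hcoord i]
  rw [hyi, ← mul_one ε⁻¹, le_inv_mul_iff₀ hε]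
  exact (pow_le_one_iff_of_nonneg (by positivity) two_ne_zero).1 hεy

end

section

variable {n : ℕ}

def massFractions (ρ : Fin n → ℝ) : Fin (n + 1) → ℝ := Fin.snoc ρ (1 - ∑ i, ρ i)

theorem massFractions_pos {ρ : Fin n → ℝ} (hρ : ∀ i, 0 < ρ i) (hs : ∑ i, ρ i < 1)
    (k : Fin (n + 1)) : 0 < massFractions ρ k := by
  induction k using Fin.lastCases with
  | last => simpa [massFractions] using hs
  | cast i => simpa [massFractions] using hρ i

theorem sum_massFractions (ρ : Fin n → ℝ) : ∑ k, massFractions ρ k = 1 := by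
  simp [massFractions, Fin.sum_univ_castSucc]

def zeroSumLift (n : ℕ) : Matrix (Fin (n + 1)) (Fin n) ℝ :=
  of fun k a => if k = a.castSucc then 1 else if k = Fin.last n then -1 else 0

@[simp]
theorem zeroSumLift_castSucc (a b : Fin n) :
    zeroSumLift n a.castSucc b = if a = b then 1 else 0 := by
  simp [zeroSumLift]

@[simp]
theorem zeroSumLift_last (b : Fin n) : zeroSumLift n (Fin.last n) b = -1 := by
  simp [zeroSumLift, (Fin.castSucc_ne_last b).symm]

theorem zeroSumLift_mulVec (x : Fin n → ℝ) : zeroSumLift n *ᵥ x = Fin.snoc x (-∑ i, x i) := by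
  ext k
  cases k using Fin.lastCases <;> simp [mulVec, dotProduct]

theorem sum_zeroSumLift_mulVec (x : Fin n → ℝ) : ∑ k, (zeroSumLift n *ᵥ x) k = 0 := by
  simp [zeroSumLift_mulVec, Fin.sum_univ_castSucc]

theorem dotProduct_self_le_zeroSumLift_mulVec (x : Fin n → ℝ) :
    x ⬝ᵥ x ≤ (zeroSumLift n *ᵥ x) ⬝ᵥ (zeroSumLift n *ᵥ x) := by
  simp only [zeroSumLift_mulVec, dotProduct, Fin.sum_univ_castSucc, Fin.snoc_castSucc,
    Fin.snoc_last]
  nlinarith [mul_self_nonneg (∑ i, x i)]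

theorem one_vecMul_zeroSumLift : 1 ᵥ* zeroSumLift n = 0 := by
  ext a
  simp [vecMul, dotProduct, Fin.sum_univ_castSucc]

theorem Matrix.ext_of_one_vecMul_of_castSucc {β α : Type*} [Ring α]
    {X Y : Matrix (Fin (n + 1)) β α} (hsum : 1 ᵥ* X = 1 ᵥ* Y)
    (hrow : ∀ a : Fin n, X a.castSucc = Y a.castSucc) : X = Y := by
  ext k b
  induction k using Fin.lastCases with
  | last =>
    have hb := congrFun hsum b
    simp only [vecMul, dotProduct, Pi.one_apply, one_mul, Fin.sum_univ_castSucc, hrow] at hb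
    exact add_left_cancel hb
  | cast a => rw [hrow]

/-- `diffusionMatrix ρ d` is `A₀(ρ')` with the coefficients `d` as a parameter, and
`molarConcentration M ρ • massMatrix ρ` is `G(ρ')`. -/
noncomputable def diffusionMatrix (ρ : Fin n → ℝ) (d : Matrix (Fin (n + 1)) (Fin (n + 1)) ℝ) :
    Matrix (Fin n) (Fin n) ℝ :=
  of fun i j =>
    if i = j then
      (∑ k ∈ univ.erase i, (d i.castSucc k.castSucc - d i.castSucc (Fin.last n)) * ρ k)
        + d i.castSucc (Fin.last n)
    else -(d i.castSucc j.castSucc - d i.castSucc (Fin.last n)) * ρ i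

noncomputable def massMatrix (ρ : Fin n → ℝ) : Matrix (Fin n) (Fin n) ℝ :=
  of fun i j => 1 / (1 - ∑ k, ρ k) + if i = j then 1 / ρ i else 0

theorem massMatrix_eq (ρ : Fin n → ℝ) :
    massMatrix ρ = (zeroSumLift n)ᵀ * diagonal (massFractions ρ)⁻¹ * zeroSumLift n := by
  ext a b
  rw [mul_apply, Fin.sum_univ_castSucc]
  rcases eq_or_ne a b with rfl | hab
  · simp [mul_diagonal, massFractions, massMatrix, add_comm]
  · simp [mul_diagonal, massFractions, massMatrix, hab, hab.symm]

theorem diagonal_mul_maxwellStefanMatrix_mul_zeroSumLift_castSucc {ρ : Fin n → ℝ}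
    (hρ : ∀ i, ρ i ≠ 0) (d : Matrix (Fin (n + 1)) (Fin (n + 1)) ℝ) (a b : Fin n) :
    (diagonal (massFractions ρ) * maxwellStefanMatrix (massFractions ρ) d * zeroSumLift n)
      a.castSucc b = diffusionMatrix ρ d a b := by
  rw [Matrix.mul_assoc, diagonal_mul, mul_apply, Fin.sum_univ_castSucc]
  rcases eq_or_ne a b with rfl | hab
  · simp only [massFractions, Fin.snoc_castSucc, maxwellStefanMatrix, Fin.sum_univ_castSucc,
      Fin.snoc_last, Matrix.sub_apply, zeroSumLift_castSucc, mul_ite, mul_one, mul_zero,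
      sum_ite_eq', mem_univ, ↓reduceIte, diagonal_apply_eq, ne_eq, Fin.castSucc_ne_last,
      not_false_eq_true, diagonal_apply_ne, zero_sub, zeroSumLift_last, mul_neg, neg_neg,
      diffusionMatrix, sub_mul, sum_sub_distrib, sum_erase_eq_sub, ← Finset.mul_sum, neg_sub,
      of_apply]
    field_simp [hρ a]
    ring
  · simp only [massFractions, Fin.snoc_castSucc, maxwellStefanMatrix, Matrix.sub_apply,
      zeroSumLift_castSucc, mul_ite, mul_one, mul_zero, sum_ite_eq', mem_univ, ↓reduceIte, ne_eq,
      Fin.castSucc_inj, hab, not_false_eq_true, diagonal_apply_ne, zero_sub, Fin.castSucc_ne_last,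
      zeroSumLift_last, mul_neg, neg_neg, diffusionMatrix, sum_erase_eq_sub, neg_sub, of_apply]
    ring

theorem zeroSumLift_mul_diffusionMatrix {ρ : Fin n → ℝ} (hρ : ∀ i, 0 < ρ i) (hs : ∑ i, ρ i < 1)
    {d : Matrix (Fin (n + 1)) (Fin (n + 1)) ℝ} (hd : d.IsSymm) :
    zeroSumLift n * diffusionMatrix ρ d
      = diagonal (massFractions ρ) * maxwellStefanMatrix (massFractions ρ) d * zeroSumLift n := by
  have hr := massFractions_pos hρ hs
  -- Both sides have zero column sums, so it suffices to compare the first `n` rows.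
  refine Matrix.ext_of_one_vecMul_of_castSucc ?_ fun a => funext fun b => ?_
  · rw [← vecMul_vecMul, one_vecMul_zeroSumLift, zero_vecMul, ← vecMul_vecMul, ← vecMul_vecMul]
    have hdiag : 1 ᵥ* diagonal (massFractions ρ) = massFractions ρ := funext fun k => by
      simp [vecMul_diagonal]
    rw [hdiag, vecMul_maxwellStefanMatrix (fun k => (hr k).ne') hd, zero_vecMul]
  · rw [diagonal_mul_maxwellStefanMatrix_mul_zeroSumLift_castSucc (fun i => (hρ i).ne')]
    simp [mul_apply]

theorem massMatrix_mul_diffusionMatrix {ρ : Fin n → ℝ} (hρ : ∀ i, 0 < ρ i) (hs : ∑ i, ρ i < 1)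
    {d : Matrix (Fin (n + 1)) (Fin (n + 1)) ℝ} (hd : d.IsSymm) :
    massMatrix ρ * diffusionMatrix ρ d
      = (zeroSumLift n)ᵀ * maxwellStefanMatrix (massFractions ρ) d * zeroSumLift n := by
  have hr := massFractions_pos hρ hs
  have hinv : diagonal (massFractions ρ)⁻¹ * diagonal (massFractions ρ) = 1 := by
    rw [diagonal_mul_diagonal, ← diagonal_one]
    exact congrArg diagonal (funext fun k => inv_mul_cancel₀ (hr k).ne')
  simp only [massMatrix_eq, Matrix.mul_assoc, zeroSumLift_mul_diffusionMatrix hρ hs hd]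
  rw [← Matrix.mul_assoc (diagonal _) (diagonal _), hinv, Matrix.one_mul]

theorem massMatrix_mul_diffusionMatrix_isSymm {ρ : Fin n → ℝ} (hρ : ∀ i, 0 < ρ i)
    (hs : ∑ i, ρ i < 1) {d : Matrix (Fin (n + 1)) (Fin (n + 1)) ℝ} (hd : d.IsSymm) :
    (massMatrix ρ * diffusionMatrix ρ d).IsSymm := by
  rw [massMatrix_mul_diffusionMatrix hρ hs hd, IsSymm, transpose_mul, transpose_mul,
    transpose_transpose, (maxwellStefanMatrix_isSymm hd).eq, Matrix.mul_assoc]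

theorem mul_dotProduct_self_le_dotProduct_massMatrix_mul_diffusionMatrix_mulVec
    {ρ : Fin n → ℝ} (hρ : ∀ i, 0 < ρ i) (hs : ∑ i, ρ i < 1)
    {d : Matrix (Fin (n + 1)) (Fin (n + 1)) ℝ} (hd : d.IsSymm) {δ : ℝ} (hδ : 0 ≤ δ)
    (hdδ : ∀ i j, i ≠ j → δ ≤ d i j) (x : Fin n → ℝ) :
    δ * (x ⬝ᵥ x) ≤ x ⬝ᵥ (massMatrix ρ * diffusionMatrix ρ d) *ᵥ x := by
  set z := zeroSumLift n *ᵥ x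
  have hz : x ⬝ᵥ (massMatrix ρ * diffusionMatrix ρ d) *ᵥ x
      = z ⬝ᵥ maxwellStefanMatrix (massFractions ρ) d *ᵥ z := by
    rw [massMatrix_mul_diffusionMatrix hρ hs hd, ← mulVec_mulVec, ← mulVec_mulVec,
      dotProduct_mulVec, vecMul_transpose]
  rw [hz]
  calc δ * (x ⬝ᵥ x) ≤ δ * (z ⬝ᵥ z) := by gcongr; exact dotProduct_self_le_zeroSumLift_mulVec x
    _ ≤ _ := mul_dotProduct_self_le_dotProduct_maxwellStefanMatrix_mulVec
      (massFractions_pos hρ hs) (sum_massFractions ρ) hd hδ hdδ (sum_zeroSumLift_mulVec x)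

theorem diffusionMatrix_smul (ρ : Fin n → ℝ) (c : ℝ) (d : Matrix (Fin (n + 1)) (Fin (n + 1)) ℝ) :
    diffusionMatrix ρ (c • d) = c • diffusionMatrix ρ d := by
  ext i j
  simp only [diffusionMatrix, Matrix.smul_apply, of_apply, smul_eq_mul]
  split_ifs
  · rw [mul_add, Finset.mul_sum]
    exact congrArg₂ _ (Finset.sum_congr rfl fun k _ => by ring) rfl
  · ring

noncomputable def molarConcentration (M : Fin (n + 1) → ℝ) (ρ : Fin n → ℝ) : ℝ :=
  (∑ i, ρ i / M i.castSucc) + (1 - ∑ i, ρ i) / M (Fin.last n)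

theorem molarConcentration_eq (M : Fin (n + 1) → ℝ) (ρ : Fin n → ℝ) :
    molarConcentration M ρ = ∑ k, massFractions ρ k / M k := by
  simp [molarConcentration, massFractions, Fin.sum_univ_castSucc]

variable {M : Fin (n + 1) → ℝ} {ρ : Fin n → ℝ}

theorem molarConcentration_pos (hM : ∀ k, 0 < M k) (hρ : ∀ i, 0 < ρ i) (hs : ∑ i, ρ i < 1) :
    0 < molarConcentration M ρ := by
  rw [molarConcentration_eq]
  exact sum_pos (fun k _ => div_pos (massFractions_pos hρ hs k) (hM k)) univ_nonempty

theorem molarConcentration_le_inv {m : ℝ} (hm : 0 < m) (hmM : ∀ k, m ≤ M k) (hρ : ∀ i, 0 < ρ i)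
    (hs : ∑ i, ρ i < 1) : molarConcentration M ρ ≤ m⁻¹ := by
  rw [molarConcentration_eq, ← one_div, ← sum_massFractions ρ, sum_div]
  exact sum_le_sum fun k _ => div_le_div_of_nonneg_left (massFractions_pos hρ hs k).le hm (hmM k)

theorem exists_pos_le_molarConcentration_mul (hM : ∀ k, 0 < M k)
    {D : Fin (n + 1) → Fin (n + 1) → ℝ} (hD : ∀ i j, i ≠ j → 0 < D i j) :
    ∃ ε > 0, ∀ ρ : Fin n → ℝ, (∀ i, 0 < ρ i) → ∑ i, ρ i < 1 → ∀ i j, i ≠ j →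
      ε ≤ molarConcentration M ρ * (1 / (molarConcentration M ρ ^ 2 * M i * M j * D i j)) := by
  obtain ⟨k₀, hk₀⟩ := Finite.exists_min M
  obtain ⟨k₁, hk₁⟩ := Finite.exists_max M
  obtain ⟨p, hp⟩ := Finite.exists_max (Function.uncurry D)
  have hm := hM k₀
  have hMx := hM k₁
  set Dx := max (Function.uncurry D p) 1
  have hDx : ∀ i j, D i j ≤ Dx := fun i j => (hp (i, j)).trans (le_max_left _ _)
  refine ⟨M k₀ / (M k₁ * M k₁ * Dx), by positivity, fun ρ hρ hs i j hij => ?_⟩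
  have hc := molarConcentration_pos hM hρ hs
  have hcm := molarConcentration_le_inv hm hk₀ hρ hs
  have hMi := hM i
  have hMj := hM j
  have hDij := hD i j hij
  calc M k₀ / (M k₁ * M k₁ * Dx) = 1 / ((M k₀)⁻¹ * M k₁ * M k₁ * Dx) := by field_simp
    _ ≤ 1 / (molarConcentration M ρ * M i * M j * D i j) := by
      gcongr
      exacts [hk₁ i, hk₁ j, hDx i j]
    _ = _ := by field_simp

end

theorem stmt11_general (N : ℕ) (M : Fin (N + 1) → ℝ) (hM : ∀ i, 0 < M i)
    (D : Fin (N + 1) → Fin (N + 1) → ℝ) (hDpos : ∀ i j, i ≠ j → 0 < D i j)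
    (hDsymm : ∀ i j, D i j = D j i) :
    let S : Set (Fin N → ℝ) := {ρ | (∀ i, 0 < ρ i ∧ ρ i < 1) ∧ ∑ i, ρ i < 1}
    let c : (Fin N → ℝ) → ℝ := fun ρ =>
      (∑ i, ρ i / M i.castSucc) + (1 - ∑ i, ρ i) / M (Fin.last N)
    let dcoef : (Fin N → ℝ) → Fin (N + 1) → Fin (N + 1) → ℝ := fun ρ i j =>
      1 / ((c ρ) ^ 2 * M i * M j * D i j)
    let A : (Fin N → ℝ) → Matrix (Fin N) (Fin N) ℝ := fun ρ => Matrix.of fun i j =>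
      if i = j then
        (∑ k ∈ Finset.univ.erase i,
          (dcoef ρ i.castSucc k.castSucc - dcoef ρ i.castSucc (Fin.last N)) * ρ k)
          + dcoef ρ i.castSucc (Fin.last N)
      else -(dcoef ρ i.castSucc j.castSucc - dcoef ρ i.castSucc (Fin.last N)) * ρ i
    let G : (Fin N → ℝ) → Matrix (Fin N) (Fin N) ℝ := fun ρ => Matrix.of fun i j =>
      c ρ * (1 / (1 - ∑ k, ρ k) + (if i = j then 1 / ρ i else 0))
    let B : (Fin N → ℝ) → Matrix (Fin N) (Fin N) ℝ := fun ρ => (A ρ)⁻¹ * (G ρ)⁻¹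
    (∀ ρ ∈ S, (B ρ).IsSymm ∧ (B ρ).PosDef) ∧
      ∃ C > 0, ∀ ρ ∈ S, ∀ i j, |B ρ i j| ≤ C := by
  intro S c dcoef A G B
  obtain ⟨ε, hε, hεd⟩ := exists_pos_le_molarConcentration_mul hM hDpos
  have hGA : ∀ ρ ∈ S, (G ρ * A ρ).IsSymm ∧ ∀ x, ε * (x ⬝ᵥ x) ≤ x ⬝ᵥ (G ρ * A ρ) *ᵥ x := by
    rintro ρ ⟨hρ1, hs⟩
    have hρ : ∀ i, 0 < ρ i := fun i => (hρ1 i).1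
    set d := c ρ • of (dcoef ρ)
    have hd : d.IsSymm := IsSymm.smul (IsSymm.ext fun i j => by
      simp only [dcoef, of_apply, hDsymm j i]; ring) _
    have hGA : G ρ * A ρ = massMatrix ρ * diffusionMatrix ρ d := by
      rw [diffusionMatrix_smul, mul_smul_comm, ← smul_mul_assoc]; rfl
    rw [hGA]
    exact ⟨massMatrix_mul_diffusionMatrix_isSymm hρ hs hd,
      mul_dotProduct_self_le_dotProduct_massMatrix_mul_diffusionMatrix_mulVec hρ hs hd hε.le
        (hεd ρ hρ hs)⟩
  have hB : ∀ ρ, B ρ = (G ρ * A ρ)⁻¹ := fun ρ => (Matrix.mul_inv_rev _ _).symm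
  refine ⟨fun ρ hρ => ?_, ε⁻¹, inv_pos.2 hε, fun ρ hρ i j => ?_⟩ <;>
    obtain ⟨hsymm, hcoer⟩ := hGA ρ hρ <;> rw [hB]
  · exact ⟨hsymm.inv, (posDef_of_coercive hsymm hε hcoer).inv⟩
  · exact abs_inv_apply_le_of_coercive (posDef_of_coercive hsymm hε hcoer).det_pos.ne'.isUnit hε
      hcoer i j

/-- The matrix `B(ρ') = A_0(ρ')⁻¹ G(ρ')⁻¹` is symmetric and positive definite on the
open simplex, with entries uniformly bounded by a constant depending only on the molar
masses and the diffusion coefficients. -/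
theorem stmt11 (N : ℕ) (hN : 1 ≤ N) (M : Fin (N + 1) → ℝ) (hM : ∀ i, 0 < M i)
    (D : Fin (N + 1) → Fin (N + 1) → ℝ) (hDpos : ∀ i j, i ≠ j → 0 < D i j)
    (hDsymm : ∀ i j, D i j = D j i) :
    let S : Set (Fin N → ℝ) := {ρ | (∀ i, 0 < ρ i ∧ ρ i < 1) ∧ ∑ i, ρ i < 1}
    let c : (Fin N → ℝ) → ℝ := fun ρ =>
      (∑ i, ρ i / M i.castSucc) + (1 - ∑ i, ρ i) / M (Fin.last N)
    let dcoef : (Fin N → ℝ) → Fin (N + 1) → Fin (N + 1) → ℝ := fun ρ i j =>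
      1 / ((c ρ) ^ 2 * M i * M j * D i j)
    let A : (Fin N → ℝ) → Matrix (Fin N) (Fin N) ℝ := fun ρ => Matrix.of fun i j =>
      if i = j then
        (∑ k ∈ Finset.univ.erase i,
          (dcoef ρ i.castSucc k.castSucc - dcoef ρ i.castSucc (Fin.last N)) * ρ k)
          + dcoef ρ i.castSucc (Fin.last N)
      else -(dcoef ρ i.castSucc j.castSucc - dcoef ρ i.castSucc (Fin.last N)) * ρ i
    let G : (Fin N → ℝ) → Matrix (Fin N) (Fin N) ℝ := fun ρ => Matrix.of fun i j =>
      c ρ * (1 / (1 - ∑ k, ρ k) + (if i = j then 1 / ρ i else 0))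
    let B : (Fin N → ℝ) → Matrix (Fin N) (Fin N) ℝ := fun ρ => (A ρ)⁻¹ * (G ρ)⁻¹
    (∀ ρ ∈ S, (B ρ).IsSymm ∧ (B ρ).PosDef) ∧
      ∃ C > 0, ∀ ρ ∈ S, ∀ i j, |B ρ i j| ≤ C :=
  stmt11_general N M hM D hDpos hDsymm
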